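/- Let G = SO₃(ℂ) act diagonally on V = 2R₂ = ℂ³ ⊕ ℂ³ (two copies of its standard representation). Then G' equals the image of O₃(ℂ) acting diagonally on ℂ³ ⊕ ℂ³. -/

import Mathlib

noncomputable section

/-- A function `V → ℂ` is a polynomial function if it lies in the subalgebra of
functions generated by the linear functionals, i.e. it is given by a polynomial
in linear coordinates. -/
def IsPolyFun {V : Type*} [AddCommGroup V] [Module ℂ V] (f : V → ℂ) : Prop :=
  f ∈ Algebra.adjoin ℂ (Set.range fun l : V →ₗ[ℂ] ℂ => (l : V → ℂ))

/-- Given a subgroup `G` of `GL(V)`, the group `G'` of all linear automorphisms of `V`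
preserving every `G`-invariant polynomial function on `V`. -/
def primeGroup {V : Type*} [AddCommGroup V] [Module ℂ V]
    (G : Subgroup (V ≃ₗ[ℂ] V)) : Subgroup (V ≃ₗ[ℂ] V) where
  carrier := {φ | ∀ f : V → ℂ, IsPolyFun f →
      (∀ g ∈ G, ∀ v : V, f (g v) = f v) → ∀ v : V, f (φ v) = f v}
  one_mem' := by intro f _ _ v; rfl
  mul_mem' := by
    intro a b ha hb f hf hinv v
    have h2 : f (a (b v)) = f (b v) := ha f hf hinv (b v)
    exact h2.trans (hb f hf hinv v)
  inv_mem' := by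
    intro a ha f hf hinv v
    have h := ha f hf hinv (a⁻¹ v)
    have : a (a⁻¹ v) = v := a.apply_symm_apply v
    rw [this] at h
    exact h.symm

/-- The algebraic exponential of an endomorphism of a finite-dimensional space
(intended for nilpotent endomorphisms, where the series is a finite sum). -/
def endExp {g : Type*} [AddCommGroup g] [Module ℂ g] [FiniteDimensional ℂ g]
    (A : Module.End ℂ g) : Module.End ℂ g :=
  ∑ k ∈ Finset.range (Module.finrank ℂ g + 1), (k.factorial : ℂ)⁻¹ • A ^ k

/-- The adjoint group `G = Aut(g)⁰` of a semisimple Lie algebra `g`: the subgroup of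
`GL(g)` generated by the exponentials of nilpotent inner derivations `ad x`. -/
def adjointGroup (g : Type*) [LieRing g] [LieAlgebra ℂ g] [FiniteDimensional ℂ g] :
    Subgroup (g ≃ₗ[ℂ] g) :=
  Subgroup.closure {u : g ≃ₗ[ℂ] g | ∃ x : g,
    IsNilpotent (LieAlgebra.ad ℂ g x) ∧ (u : g →ₗ[ℂ] g) = endExp (LieAlgebra.ad ℂ g x)}

/-- The subgroup of `GL(g)` fixing a subalgebra `t` pointwise. -/
def pointwiseStab {g : Type*} [LieRing g] [LieAlgebra ℂ g]
    (t : LieSubalgebra ℂ g) : Subgroup (g ≃ₗ[ℂ] g) where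
  carrier := {u | ∀ x ∈ t, u x = x}
  one_mem' := by intro x _; rfl
  mul_mem' := by
    intro a b ha hb x hx
    have : a (b x) = a x := by rw [hb x hx]
    exact this.trans (ha x hx)
  inv_mem' := by
    intro a ha x hx
    conv_lhs => rw [← ha x hx]
    exact a.symm_apply_apply x

/-- The maximal torus of the adjoint group corresponding to a Cartan subalgebra `t`:
the elements of the adjoint group acting trivially on `t`. -/
def maximalTorus (g : Type*) [LieRing g] [LieAlgebra ℂ g] [FiniteDimensional ℂ g]
    (t : LieSubalgebra ℂ g) : Subgroup (g ≃ₗ[ℂ] g) :=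
  adjointGroup g ⊓ pointwiseStab t

namespace Stmt15

/-- The standard nondegenerate quadratic form on `ℂ³`. -/
def q (v : Fin 3 → ℂ) : ℂ := v 0 ^ 2 + v 1 ^ 2 + v 2 ^ 2

/-- The orthogonal group `O₃(ℂ)` of the quadratic form `q`. -/
def O3 : Subgroup ((Fin 3 → ℂ) ≃ₗ[ℂ] (Fin 3 → ℂ)) where
  carrier := {φ | ∀ v, q (φ v) = q v}
  one_mem' := by intro v; rfl
  mul_mem' := by
    intro a b ha hb v
    have : q (a (b v)) = q (b v) := ha (b v)
    exact this.trans (hb v)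
  inv_mem' := by
    intro a ha v
    conv_rhs => rw [← a.apply_symm_apply v]
    exact (ha (a⁻¹ v)).symm

/-- The special orthogonal group `SO₃(ℂ)`. -/
def SO3 : Subgroup ((Fin 3 → ℂ) ≃ₗ[ℂ] (Fin 3 → ℂ)) where
  carrier := {φ | (∀ v, q (φ v) = q v) ∧ LinearEquiv.det φ = 1}
  one_mem' := ⟨by intro v; rfl, map_one LinearEquiv.det⟩
  mul_mem' := by
    intro a b ha hb
    refine ⟨fun v => ((ha.1 (b v)).trans (hb.1 v)), ?_⟩
    rw [map_mul, ha.2, hb.2, one_mul]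
  inv_mem' := by
    intro a ha
    refine ⟨fun v => ?_, by rw [map_inv, ha.2, inv_one]⟩
    conv_rhs => rw [← a.apply_symm_apply v]
    exact (ha.1 (a⁻¹ v)).symm

/-- The diagonal embedding `GL(ℂ³) →* GL(ℂ³ ⊕ ℂ³)`. -/
def diag : ((Fin 3 → ℂ) ≃ₗ[ℂ] (Fin 3 → ℂ)) →*
    (((Fin 3 → ℂ) × (Fin 3 → ℂ)) ≃ₗ[ℂ] ((Fin 3 → ℂ) × (Fin 3 → ℂ))) :=
  MonoidHom.mk' (fun e => e.prodCongr e) (by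
    intro a b
    apply LinearEquiv.ext
    intro v
    rfl)

end Stmt15

/-!
An `SO₃`-invariant polynomial `f` on `ℂ³ ⊕ ℂ³` is even. Indeed, if the Gram determinant
`(v × w) ⬝ (v × w)` of `(v, w)` is nonzero, the half-turn about the axis `v × w` lies in `SO₃`
and sends `(v, w)` to `(-v, -w)`; hence `Gram · (f ∘ neg - f) = 0`, and polynomial functions
form an integral domain. So `-1 ∈ G'`, and since `O₃ = SO₃ ∪ -SO₃` (the dimension is odd),
`O₃ ⊆ G'`. Conversely, `G'` preserves the invariants `v ⬝ v`, `w ⬝ w` and `v ⬝ w`. Writing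
`φ ∈ G'` in blocks, the first two force the off-diagonal blocks to vanish and the diagonal ones to
be orthogonal, and the third makes the diagonal blocks equal.
-/

open Matrix

section DotProduct

variable {K ι : Type*} [Field K] [NeZero (2 : K)] [Fintype ι]

theorem dotProduct_map_of_forall_dotProduct_self {A : (ι → K) →ₗ[K] ι → K}
    (hA : ∀ v, A v ⬝ᵥ A v = v ⬝ᵥ v) (v w : ι → K) : A v ⬝ᵥ A w = v ⬝ᵥ w := by
  have h := hA (v + w)
  simp only [map_add, add_dotProduct, dotProduct_add, hA, dotProduct_comm w v,
    dotProduct_comm (A w) (A v)] at h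
  exact mul_left_cancel₀ (two_ne_zero (α := K)) (by linear_combination h)

theorem injective_of_forall_dotProduct_self {A : (ι → K) →ₗ[K] ι → K}
    (hA : ∀ v, A v ⬝ᵥ A v = v ⬝ᵥ v) : Function.Injective A := by
  refine (injective_iff_map_eq_zero A).mpr fun v hv => dotProduct_eq_zero v fun w => ?_
  rw [← dotProduct_map_of_forall_dotProduct_self hA, hv, zero_dotProduct]

theorem surjective_of_forall_dotProduct_self {A : (ι → K) →ₗ[K] ι → K}
    (hA : ∀ v, A v ⬝ᵥ A v = v ⬝ᵥ v) : Function.Surjective A :=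
  LinearMap.injective_iff_surjective.mp (injective_of_forall_dotProduct_self hA)

theorem eq_zero_of_forall_dotProduct_self_add {A B : (ι → K) →ₗ[K] ι → K}
    (h : ∀ v w, (A v + B w) ⬝ᵥ (A v + B w) = v ⬝ᵥ v) : B = 0 := by
  have hA : ∀ v, A v ⬝ᵥ A v = v ⬝ᵥ v := fun v => by simpa using h v 0
  have hB : ∀ w, B w ⬝ᵥ B w = 0 := fun w => by simpa using h 0 w
  have hAB : ∀ v w, B w ⬝ᵥ A v = 0 := fun v w => by
    have h' := h v w
    simp only [add_dotProduct, dotProduct_add, hA, hB, dotProduct_comm (A v) (B w)] at h'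
    exact (mul_eq_zero.mp (by linear_combination h' : (2 : K) * (B w ⬝ᵥ A v) = 0)).resolve_left
      two_ne_zero
  refine LinearMap.ext fun w => dotProduct_eq_zero _ fun u => ?_
  obtain ⟨v, rfl⟩ := surjective_of_forall_dotProduct_self hA u
  exact hAB v w

theorem det_eq_one_or_neg_one_of_forall_dotProduct_self [DecidableEq ι]
    {A : (ι → K) →ₗ[K] ι → K} (hA : ∀ v, A v ⬝ᵥ A v = v ⬝ᵥ v) :
    LinearMap.det A = 1 ∨ LinearMap.det A = -1 := by
  set M := LinearMap.toMatrix' A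
  have hM : Mᵀ * M = 1 := by
    refine Matrix.toLin'.injective (LinearMap.ext fun v => dotProduct_eq _ _ fun w => ?_)
    rw [Matrix.toLin'_apply, Matrix.toLin'_apply, one_mulVec, ← mulVec_mulVec, mulVec_transpose,
      ← dotProduct_mulVec, LinearMap.toMatrix'_mulVec, LinearMap.toMatrix'_mulVec,
      dotProduct_map_of_forall_dotProduct_self hA]
  have hdet := congrArg Matrix.det hM
  rw [det_mul, det_transpose, det_one, LinearMap.det_toMatrix'] at hdet
  exact mul_self_eq_one_iff.mp hdet

theorem exists_eq_prodMap_of_forall_dotProduct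
    {φ : (ι → K) × (ι → K) →ₗ[K] (ι → K) × (ι → K)}
    (h₁ : ∀ x, (φ x).1 ⬝ᵥ (φ x).1 = x.1 ⬝ᵥ x.1) (h₂ : ∀ x, (φ x).2 ⬝ᵥ (φ x).2 = x.2 ⬝ᵥ x.2)
    (h₁₂ : ∀ x, (φ x).1 ⬝ᵥ (φ x).2 = x.1 ⬝ᵥ x.2) :
    ∃ A : (ι → K) →ₗ[K] ι → K, (∀ v, A v ⬝ᵥ A v = v ⬝ᵥ v) ∧ ∀ x, φ x = (A x.1, A x.2) := by
  set A := LinearMap.fst K _ _ ∘ₗ φ ∘ₗ LinearMap.inl K (ι → K) (ι → K)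
  set B := LinearMap.fst K _ _ ∘ₗ φ ∘ₗ LinearMap.inr K (ι → K) (ι → K)
  set C := LinearMap.snd K _ _ ∘ₗ φ ∘ₗ LinearMap.inl K (ι → K) (ι → K)
  set D := LinearMap.snd K _ _ ∘ₗ φ ∘ₗ LinearMap.inr K (ι → K) (ι → K)
  have hφ : ∀ v w, φ (v, w) = (A v + B w, C v + D w) := fun v w => by
    rw [show ((v, w) : (ι → K) × (ι → K)) = (v, 0) + (0, w) by simp, map_add]
    rfl
  have hA : ∀ v, A v ⬝ᵥ A v = v ⬝ᵥ v := fun v => by simpa [hφ] using h₁ (v, 0)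
  have hB : B = 0 := eq_zero_of_forall_dotProduct_self_add fun v w => by
    simpa [hφ] using h₁ (v, w)
  have hC : C = 0 := eq_zero_of_forall_dotProduct_self_add (A := D) fun w v => by
    simpa [hφ, add_comm] using h₂ (v, w)
  have hDA : D = A := LinearMap.ext fun w => dotProduct_eq _ _ fun u => by
    obtain ⟨v, rfl⟩ := surjective_of_forall_dotProduct_self hA u
    have h := h₁₂ (v, w)
    simp only [hφ, hB, hC, LinearMap.zero_apply, add_zero, zero_add] at h
    rw [dotProduct_comm, h, ← dotProduct_map_of_forall_dotProduct_self hA, dotProduct_comm]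
  refine ⟨A, hA, fun x => ?_⟩
  rw [← Prod.mk.eta (p := x), hφ, hB, hC, hDA]
  simp

end DotProduct

section PolyFun

variable {V W : Type*} [AddCommGroup V] [Module ℂ V] [AddCommGroup W] [Module ℂ W]

theorem le_primeGroup (G : Subgroup (V ≃ₗ[ℂ] V)) : G ≤ primeGroup G :=
  fun g hg _ _ hinv => hinv g hg

theorem isPolyFun_linearMap (l : V →ₗ[ℂ] ℂ) : IsPolyFun l :=
  Algebra.subset_adjoin ⟨l, rfl⟩

theorem IsPolyFun.comp_linearMap {f : V → ℂ} (hf : IsPolyFun f) (L : W →ₗ[ℂ] V) :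
    IsPolyFun (f ∘ L) := by
  induction hf using Algebra.adjoin_induction with
  | mem g hg =>
    obtain ⟨l, rfl⟩ := hg
    exact isPolyFun_linearMap (l ∘ₗ L)
  | algebraMap r => exact Subalgebra.algebraMap_mem _ r
  | add g h _ _ hg hh => exact Subalgebra.add_mem _ hg hh
  | mul g h _ _ hg hh => exact Subalgebra.mul_mem _ hg hh

theorem isPolyFun_dotProduct {ι : Type*} [Fintype ι] (l₁ l₂ : V →ₗ[ℂ] ι → ℂ) :
    IsPolyFun fun x => l₁ x ⬝ᵥ l₂ x := by
  have h : (fun x => l₁ x ⬝ᵥ l₂ x) = ∑ i, (fun x => l₁ x i) * fun x => l₂ x i := by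
    ext x
    simp [dotProduct]
  rw [h]
  refine Subalgebra.sum_mem _ fun i _ => Subalgebra.mul_mem _ ?_ ?_
  exacts [isPolyFun_linearMap (LinearMap.proj i ∘ₗ l₁),
    isPolyFun_linearMap (LinearMap.proj i ∘ₗ l₂)]

theorem IsPolyFun.exists_mvPolynomial {ι : Type*} [Fintype ι] (b : Module.Basis ι ℂ V)
    {f : V → ℂ} (hf : IsPolyFun f) :
    ∃ P : MvPolynomial ι ℂ, ∀ x, f x = MvPolynomial.eval (b.equivFun x) P := by
  induction hf using Algebra.adjoin_induction with
  | mem g hg =>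
    obtain ⟨l, rfl⟩ := hg
    refine ⟨∑ i, MvPolynomial.C (l (b i)) * MvPolynomial.X i, fun x => ?_⟩
    dsimp only
    conv_lhs => rw [← b.sum_equivFun x, map_sum]
    simp [mul_comm]
  | algebraMap r => exact ⟨MvPolynomial.C r, fun x => by simp⟩
  | add g h _ _ hg hh =>
    obtain ⟨P, hP⟩ := hg
    obtain ⟨Q, hQ⟩ := hh
    exact ⟨P + Q, fun x => by simp [hP, hQ]⟩
  | mul g h _ _ hg hh =>
    obtain ⟨P, hP⟩ := hg
    obtain ⟨Q, hQ⟩ := hh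
    exact ⟨P * Q, fun x => by simp [hP, hQ]⟩

theorem IsPolyFun.eq_zero_or_eq_zero_of_mul_eq_zero [FiniteDimensional ℂ V] {f g : V → ℂ}
    (hf : IsPolyFun f) (hg : IsPolyFun g) (hfg : f * g = 0) : f = 0 ∨ g = 0 := by
  let b := Module.finBasis ℂ V
  obtain ⟨P, hP⟩ := hf.exists_mvPolynomial b
  obtain ⟨Q, hQ⟩ := hg.exists_mvPolynomial b
  have hPQ : P * Q = 0 := MvPolynomial.funext fun y => by
    have h := congrFun hfg (b.equivFun.symm y)
    rw [Pi.mul_apply, hP, hQ, LinearEquiv.apply_symm_apply] at h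
    simpa using h
  rcases mul_eq_zero.mp hPQ with h | h
  · exact Or.inl (funext fun x => by simp [hP, h])
  · exact Or.inr (funext fun x => by simp [hQ, h])

end PolyFun

namespace Stmt15

theorem q_eq_dotProduct (v : Fin 3 → ℂ) : q v = v ⬝ᵥ v := by
  simp [q, vec3_dotProduct, sq]

theorem mem_O3_iff {g : (Fin 3 → ℂ) ≃ₗ[ℂ] Fin 3 → ℂ} : g ∈ O3 ↔ ∀ v, g v ⬝ᵥ g v = v ⬝ᵥ v := by
  simp only [← q_eq_dotProduct]
  rfl

theorem mem_SO3_iff {g : (Fin 3 → ℂ) ≃ₗ[ℂ] Fin 3 → ℂ} :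
    g ∈ SO3 ↔ g ∈ O3 ∧ LinearMap.det (g : (Fin 3 → ℂ) →ₗ[ℂ] Fin 3 → ℂ) = 1 := by
  rw [← LinearEquiv.coe_det, Units.val_eq_one]
  rfl

theorem diag_apply (g : (Fin 3 → ℂ) ≃ₗ[ℂ] Fin 3 → ℂ) (x : (Fin 3 → ℂ) × (Fin 3 → ℂ)) :
    diag g x = (g x.1, g x.2) :=
  rfl

/-- The rotation by `π` about the axis `c`, when `c ⬝ᵥ c ≠ 0`. -/
def halfTurn (c : Fin 3 → ℂ) : (Fin 3 → ℂ) →ₗ[ℂ] Fin 3 → ℂ where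
  toFun x := (2 / (c ⬝ᵥ c) * (c ⬝ᵥ x)) • c - x
  map_add' x y := by
    simp only [dotProduct_add, mul_add, add_smul]
    abel
  map_smul' a x := by
    simp only [dotProduct_smul, smul_eq_mul, RingHom.id_apply]
    module

theorem halfTurn_apply (c x : Fin 3 → ℂ) : halfTurn c x = (2 / (c ⬝ᵥ c) * (c ⬝ᵥ x)) • c - x :=
  rfl

theorem halfTurn_of_dotProduct_eq_zero {c x : Fin 3 → ℂ} (hx : c ⬝ᵥ x = 0) :
    halfTurn c x = -x := by
  simp [halfTurn_apply, hx]

theorem halfTurn_halfTurn {c : Fin 3 → ℂ} (hc : c ⬝ᵥ c ≠ 0) (x : Fin 3 → ℂ) :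
    halfTurn c (halfTurn c x) = x := by
  have hcx : c ⬝ᵥ halfTurn c x = c ⬝ᵥ x := by
    rw [halfTurn_apply, dotProduct_sub, dotProduct_smul, smul_eq_mul]
    field_simp
    ring
  rw [halfTurn_apply, hcx, halfTurn_apply, sub_sub_cancel]

theorem halfTurn_dotProduct_self {c : Fin 3 → ℂ} (hc : c ⬝ᵥ c ≠ 0) (x : Fin 3 → ℂ) :
    halfTurn c x ⬝ᵥ halfTurn c x = x ⬝ᵥ x := by
  simp only [halfTurn_apply, sub_dotProduct, dotProduct_sub, smul_dotProduct, dotProduct_smul,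
    smul_eq_mul, dotProduct_comm x c]
  field_simp
  ring

theorem det_halfTurn {c : Fin 3 → ℂ} (hc : c ⬝ᵥ c ≠ 0) : LinearMap.det (halfTurn c) = 1 := by
  set r := 2 / (c ⬝ᵥ c)
  have hr : r * (c 0 * c 0 + c 1 * c 1 + c 2 * c 2) = 2 := by
    rw [← vec3_dotProduct]
    exact div_mul_cancel₀ 2 hc
  rw [← LinearMap.det_toMatrix', det_fin_three]
  simp only [LinearMap.toMatrix'_apply, halfTurn_apply, dotProduct_single_one]
  simp
  linear_combination hr

def halfTurnEquiv (c : Fin 3 → ℂ) (hc : c ⬝ᵥ c ≠ 0) : (Fin 3 → ℂ) ≃ₗ[ℂ] Fin 3 → ℂ :=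
  LinearEquiv.ofInvolutive (halfTurn c) (halfTurn_halfTurn hc)

theorem halfTurnEquiv_mem_SO3 {c : Fin 3 → ℂ} (hc : c ⬝ᵥ c ≠ 0) : halfTurnEquiv c hc ∈ SO3 :=
  mem_SO3_iff.mpr ⟨mem_O3_iff.mpr (halfTurn_dotProduct_self hc), det_halfTurn hc⟩
def gram (x : (Fin 3 → ℂ) × (Fin 3 → ℂ)) : ℂ := (x.1 ⨯₃ x.2) ⬝ᵥ (x.1 ⨯₃ x.2)

theorem isPolyFun_gram : IsPolyFun gram := by
  have hdot (l₁ l₂ : (Fin 3 → ℂ) × (Fin 3 → ℂ) →ₗ[ℂ] Fin 3 → ℂ) :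
      IsPolyFun fun x => l₁ x ⬝ᵥ l₂ x := isPolyFun_dotProduct l₁ l₂
  have h : gram = (fun x => x.1 ⬝ᵥ x.1) * (fun x => x.2 ⬝ᵥ x.2)
      - (fun x => x.1 ⬝ᵥ x.2) * (fun x => x.2 ⬝ᵥ x.1) := by
    ext x
    exact cross_dot_cross _ _ _ _
  rw [h]
  refine Subalgebra.sub_mem _ (Subalgebra.mul_mem _ ?_ ?_) (Subalgebra.mul_mem _ ?_ ?_)
  exacts [hdot (.fst ℂ _ _) (.fst ℂ _ _), hdot (.snd ℂ _ _) (.snd ℂ _ _),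
    hdot (.fst ℂ _ _) (.snd ℂ _ _), hdot (.snd ℂ _ _) (.fst ℂ _ _)]

theorem gram_ne_zero : gram ≠ 0 := fun h => by
  simpa [gram, cross_apply, vec3_dotProduct] using congrFun h (![1, 0, 0], ![0, 1, 0])

theorem apply_neg_of_gram_ne_zero {f : (Fin 3 → ℂ) × (Fin 3 → ℂ) → ℂ}
    (hinv : ∀ g ∈ Subgroup.map diag SO3, ∀ x, f (g x) = f x) {x : (Fin 3 → ℂ) × (Fin 3 → ℂ)}
    (hx : gram x ≠ 0) : f (-x) = f x := by
  have hx₁ : (x.1 ⨯₃ x.2) ⬝ᵥ x.1 = 0 := by rw [dotProduct_comm, dot_self_cross]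
  have hx₂ : (x.1 ⨯₃ x.2) ⬝ᵥ x.2 = 0 := by rw [dotProduct_comm, dot_cross_self]
  have h := hinv _ ⟨_, halfTurnEquiv_mem_SO3 hx, rfl⟩ x
  change f (halfTurn _ x.1, halfTurn _ x.2) = f x at h
  rwa [halfTurn_of_dotProduct_eq_zero hx₁, halfTurn_of_dotProduct_eq_zero hx₂, ← Prod.neg_mk] at h

theorem neg_mem_primeGroup : LinearEquiv.neg ℂ ∈ primeGroup (Subgroup.map diag SO3) := by
  intro f hf hinv
  have hodd : IsPolyFun (f ∘ LinearEquiv.neg ℂ - f) :=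
    Subalgebra.sub_mem _ (hf.comp_linearMap (LinearEquiv.neg ℂ).toLinearMap) hf
  have hgram_odd : gram * (f ∘ LinearEquiv.neg ℂ - f) = 0 := by
    ext x
    by_cases hx : gram x = 0
    · simp [hx]
    · simp [apply_neg_of_gram_ne_zero hinv hx]
  intro x
  simpa [sub_eq_zero] using
    congrFun ((isPolyFun_gram.eq_zero_or_eq_zero_of_mul_eq_zero hodd hgram_odd).resolve_left
      gram_ne_zero) x

theorem mem_SO3_or_neg_mem_SO3 {g : (Fin 3 → ℂ) ≃ₗ[ℂ] Fin 3 → ℂ} (hg : g ∈ O3) :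
    g ∈ SO3 ∨ g.trans (LinearEquiv.neg ℂ) ∈ SO3 := by
  have hg' := mem_O3_iff.mp hg
  have hneg : g.trans (LinearEquiv.neg ℂ) ∈ O3 := mem_O3_iff.mpr fun v => by simpa using hg' v
  have hdet : LinearMap.det (g.trans (LinearEquiv.neg ℂ) : (Fin 3 → ℂ) →ₗ[ℂ] Fin 3 → ℂ)
      = -LinearMap.det (g : (Fin 3 → ℂ) →ₗ[ℂ] Fin 3 → ℂ) := by
    rw [show (g.trans (LinearEquiv.neg ℂ) : (Fin 3 → ℂ) →ₗ[ℂ] Fin 3 → ℂ)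
      = (-1 : ℂ) • g.toLinearMap from LinearMap.ext fun v => by simp, LinearMap.det_smul]
    simp only [Module.finrank_fin_fun]
    ring
  rcases det_eq_one_or_neg_one_of_forall_dotProduct_self (A := g.toLinearMap) hg' with h | h
  · exact Or.inl (mem_SO3_iff.mpr ⟨hg, h⟩)
  · exact Or.inr (mem_SO3_iff.mpr ⟨hneg, by rw [hdet, h, neg_neg]⟩)

theorem map_diag_O3_le_primeGroup : Subgroup.map diag O3 ≤ primeGroup (Subgroup.map diag SO3) := by
  rintro _ ⟨g, hg, rfl⟩
  rcases mem_SO3_or_neg_mem_SO3 hg with h | h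
  · exact le_primeGroup _ ⟨g, h, rfl⟩
  · have hg : diag g = LinearEquiv.neg ℂ * diag (g.trans (LinearEquiv.neg ℂ)) :=
      LinearEquiv.ext fun x => by simp [diag_apply]
    rw [hg]
    exact mul_mem neg_mem_primeGroup (le_primeGroup _ ⟨_, h, rfl⟩)

theorem primeGroup_le_map_diag_O3 : primeGroup (Subgroup.map diag SO3) ≤ Subgroup.map diag O3 := by
  intro φ hφ
  have hdot (l₁ l₂ : (Fin 3 → ℂ) × (Fin 3 → ℂ) →ₗ[ℂ] Fin 3 → ℂ)
      (hl₁ : ∀ g x, l₁ (diag g x) = g (l₁ x)) (hl₂ : ∀ g x, l₂ (diag g x) = g (l₂ x)) (x) :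
      l₁ (φ x) ⬝ᵥ l₂ (φ x) = l₁ x ⬝ᵥ l₂ x := by
    refine hφ _ (isPolyFun_dotProduct l₁ l₂) ?_ x
    rintro _ ⟨g, hg, rfl⟩ y
    simp only [hl₁, hl₂]
    exact dotProduct_map_of_forall_dotProduct_self (A := g.toLinearMap)
      (mem_O3_iff.mp (mem_SO3_iff.mp hg).1) _ _
  obtain ⟨A, hA, hφA⟩ := exists_eq_prodMap_of_forall_dotProduct (φ := φ.toLinearMap)
    (hdot (.fst ℂ _ _) (.fst ℂ _ _) (fun _ _ => rfl) (fun _ _ => rfl))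
    (hdot (.snd ℂ _ _) (.snd ℂ _ _) (fun _ _ => rfl) (fun _ _ => rfl))
    (hdot (.fst ℂ _ _) (.snd ℂ _ _) (fun _ _ => rfl) (fun _ _ => rfl))
  exact ⟨.ofInjectiveEndo A (injective_of_forall_dotProduct_self hA), mem_O3_iff.mpr hA,
    LinearEquiv.ext fun x => (hφA x).symm⟩

/-- Let `G = SO₃(ℂ)` act diagonally on `V = 2R₂ = ℂ³ ⊕ ℂ³`.  Then
`G'` equals the image of `O₃(ℂ)` acting diagonally on `ℂ³ ⊕ ℂ³`. -/
theorem stmt15 : primeGroup (Subgroup.map diag SO3) = Subgroup.map diag O3 :=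
  le_antisymm primeGroup_le_map_diag_O3 map_diag_O3_le_primeGroup

end Stmt15
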